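/- arXiv:2105.02429 — 2 statements merged into one kernel-verified Lean document; each statement's English description precedes it below -/
import Mathlib

section
/- Let P be a finite poset on {1,...,n} and L = g(P) the associated Lie poset algebra. Let x = Σ_{i≠1} i·(E_{1,1} − E_{i,i}). Then for every strict relation p ≺ q of P, the matrix unit E_{p,q} lies in the image of ad_x : L → L; consequently rank(ad_x) ≥ |Rel(P)|. -/
/-!
`x` is the diagonal matrix with entries `d₀ = Σ_{i ≠ 0} (i+1)` and `dᵢ = -(i+1)` for `i ≠ 0`.
These entries are pairwise distinct, and `ad_x (E p q) = (d p - d q) • E p q`, so every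
off-diagonal matrix unit of `L` is an eigenvector of `ad_x` with nonzero eigenvalue and hence
lies in `ad_x L`. The rank bound follows because the matrix units are linearly independent.
-/

/-- The matrix unit `E p q`. -/
noncomputable def matE {n : ℕ} (p q : Fin n) : Matrix (Fin n) (Fin n) ℂ :=
  Matrix.single p q 1

attribute [local instance 100] LieRing.ofAssociativeRing

open Matrix

theorem Matrix.lie_diagonal_single {m R : Type*} [Fintype m] [DecidableEq m] [CommRing R]
    (d : m → R) (p q : m) (c : R) :
    ⁅diagonal d, single p q c⁆ = (d p - d q) • single p q c := by
  ext i j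
  simp only [Ring.lie_def, sub_apply, diagonal_mul, mul_diagonal, smul_apply, single_apply,
    smul_eq_mul]
  split_ifs with h
  · rw [← h.1, ← h.2]; ring
  · simp

theorem Submodule.mem_map_of_apply_eq_smul {K V : Type*} [Field K] [AddCommGroup V]
    [Module K V] (f : V →ₗ[K] V) {L : Submodule K V} {v : V} (hv : v ∈ L) {c : K} (hc : c ≠ 0)
    (hfv : f v = c • v) : v ∈ L.map f :=
  ⟨c⁻¹ • v, L.smul_mem _ hv, by rw [map_smul, hfv, smul_smul, inv_mul_cancel₀ hc, one_smul]⟩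

theorem LinearIndependent.ncard_le_finrank_of_mem {K V ι : Type*} [Field K] [AddCommGroup V]
    [Module K V] {b : ι → V} (hb : LinearIndependent K b) {W : Submodule K V}
    [FiniteDimensional K W] {S : Set ι} (hS : ∀ i ∈ S, b i ∈ W) : S.ncard ≤ Module.finrank K W := by
  have hli : LinearIndependent K (fun i : S => (⟨b i, hS i i.2⟩ : W)) :=
    LinearIndependent.of_comp W.subtype (hb.comp Subtype.val Subtype.val_injective)
  have := hli.finite
  have := Fintype.ofFinite S
  rw [← Nat.card_coe_set_eq, Nat.card_eq_fintype_card]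
  exact hli.fintype_card_le_finrank

def breadthWeights (n : ℕ) [NeZero n] : Fin n → ℂ :=
  ∑ i ∈ Finset.univ.erase (0 : Fin n), (((i : ℕ) : ℂ) + 1) • (Pi.single 0 1 - Pi.single i 1)

theorem sum_eq_diagonal_breadthWeights (n : ℕ) [NeZero n] :
    ∑ i ∈ Finset.univ.erase (0 : Fin n), (((i : ℕ) : ℂ) + 1) • (matE 0 0 - matE i i) =
      diagonal (breadthWeights n) := by
  simp only [breadthWeights, matE, ← diagonal_single, diagonal_sub, ← diagonal_smul]
  exact (map_sum (diagonalAddMonoidHom (Fin n) ℂ) _ _).symm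

theorem breadthWeights_apply (n : ℕ) [NeZero n] (j : Fin n) :
    breadthWeights n j = if j = 0 then ∑ i ∈ Finset.univ.erase (0 : Fin n), (((i : ℕ) : ℂ) + 1)
      else -(((j : ℕ) : ℂ) + 1) := by
  simp only [breadthWeights, Finset.sum_apply, Pi.smul_apply, Pi.sub_apply, Pi.single_apply,
    smul_eq_mul]
  split_ifs with hj
  · subst hj
    refine Finset.sum_congr rfl fun i hi => ?_
    simp [(Finset.ne_of_mem_erase hi).symm]
  · rw [Finset.sum_eq_single_of_mem j (Finset.mem_erase.2 ⟨hj, Finset.mem_univ j⟩)]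
    · simp
    · intro i _ hij
      simp [Ne.symm hij]

theorem breadthWeights_injective (n : ℕ) [NeZero n] : Function.Injective (breadthWeights n) := by
  have hpos : ∀ j : Fin n, j ≠ 0 → breadthWeights n 0 ≠ breadthWeights n j := by
    intro j hj h
    simp only [breadthWeights_apply, ↓reduceIte, if_neg hj, eq_neg_iff_add_eq_zero] at h
    norm_cast at h
  intro p q h
  rcases eq_or_ne p 0 with rfl | hp
  · by_contra hq; exact hpos q (Ne.symm hq) h
  rcases eq_or_ne q 0 with rfl | hq
  · exact absurd h.symm (hpos p hp)
  simp only [breadthWeights_apply, if_neg hp, if_neg hq, neg_inj, add_left_inj, Nat.cast_inj] at h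
  exact Fin.ext h

theorem linearIndependent_matE (n : ℕ) :
    LinearIndependent ℂ (fun pq : Fin n × Fin n => matE pq.1 pq.2) := by
  convert (Matrix.stdBasis ℂ (Fin n) (Fin n)).linearIndependent with pq
  rw [Matrix.stdBasis_eq_single]
  rfl

theorem lie_poset_breadth_element_general (n : ℕ) [NeZero n]
    (le : Fin n → Fin n → Prop) :
    let L : Submodule ℂ (Matrix (Fin n) (Fin n) ℂ) :=
      Submodule.span ℂ {m : Matrix (Fin n) (Fin n) ℂ | ∃ p q : Fin n, le p q ∧ m = matE p q}
    let x : Matrix (Fin n) (Fin n) ℂ :=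
      ∑ i ∈ Finset.univ.erase (0 : Fin n), (((i : ℕ) : ℂ) + 1) • (matE 0 0 - matE i i)
    (∀ p q : Fin n, le p q → p ≠ q →
        matE p q ∈ Submodule.map (LieAlgebra.ad ℂ (Matrix (Fin n) (Fin n) ℂ) x) L) ∧
      Set.ncard {pq : Fin n × Fin n | le pq.1 pq.2 ∧ pq.1 ≠ pq.2} ≤
        Module.finrank ℂ
          ↥(Submodule.map (LieAlgebra.ad ℂ (Matrix (Fin n) (Fin n) ℂ) x) L) := by
  intro L x
  have hx : x = diagonal (breadthWeights n) := sum_eq_diagonal_breadthWeights n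
  have mem_image : ∀ p q : Fin n, le p q → p ≠ q →
      matE p q ∈ Submodule.map (LieAlgebra.ad ℂ (Matrix (Fin n) (Fin n) ℂ) x) L := by
    intro p q hle hne
    refine Submodule.mem_map_of_apply_eq_smul _ (Submodule.subset_span ⟨p, q, hle, rfl⟩)
      (sub_ne_zero.2 ((breadthWeights_injective n).ne hne)) ?_
    rw [LieAlgebra.ad_apply, hx]
    exact lie_diagonal_single _ _ _ _
  exact ⟨mem_image, (linearIndependent_matE n).ncard_le_finrank_of_mem fun pq h =>
    mem_image _ _ h.1 h.2⟩

/-- Let `P` be a poset on `{1,…,n}` (realized on `Fin n`, where index `i` carries the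
label `i+1`, strict relations being compatible with the natural order), `L = g(P)`,
and `x = Σ_{i ≠ 1} i·(E₁₁ − E_{ii})`.  Then for every strict relation `p ≺ q`,
`E p q` lies in the image of `ad_x : L → L`; consequently `rank(ad_x) ≥ |Rel(P)|`. -/
theorem lie_poset_breadth_element (n : ℕ) [NeZero n]
    (le : Fin n → Fin n → Prop)
    (hrefl : ∀ p, le p p)
    (hantisymm : ∀ p q, le p q → le q p → p = q)
    (htrans : ∀ p q r, le p q → le q r → le p r)
    (hcompat : ∀ p q, le p q → p ≤ q) :
    let L : Submodule ℂ (Matrix (Fin n) (Fin n) ℂ) :=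
      Submodule.span ℂ {m : Matrix (Fin n) (Fin n) ℂ | ∃ p q : Fin n, le p q ∧ m = matE p q}
    let x : Matrix (Fin n) (Fin n) ℂ :=
      ∑ i ∈ Finset.univ.erase (0 : Fin n), (((i : ℕ) : ℂ) + 1) • (matE 0 0 - matE i i)
    (∀ p q : Fin n, le p q → p ≠ q →
        matE p q ∈ Submodule.map (LieAlgebra.ad ℂ (Matrix (Fin n) (Fin n) ℂ) x) L) ∧
      Set.ncard {pq : Fin n × Fin n | le pq.1 pq.2 ∧ pq.1 ≠ pq.2} ≤
        Module.finrank ℂ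
          ↥(Submodule.map (LieAlgebra.ad ℂ (Matrix (Fin n) (Fin n) ℂ) x) L) :=
  lie_poset_breadth_element_general n le
end

section
/- The breadth of the Lie algebra of strictly upper triangular n×n matrices over ℂ equals (n−1)(n−2)/2. -/
attribute [local instance] LieRing.ofAssociativeRing

/-! Every product of two strictly upper triangular matrices is supported on `q ≥ p + 2`, so
each `ad_x` maps the algebra into the span of the matrix units `E_{p,q}` with `p + 2 ≤ q`, a space
of dimension `(n-1)(n-2)/2`. For the superdiagonal matrix `x` one has
`[x, E_{p+1,q}] = E_{p,q} - E_{p+1,q+1}`, so descending induction on `q` shows that the image of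
`ad_x` is that whole space. -/

open Matrix Submodule

namespace StrictUpperTriangular

variable {n : ℕ}

noncomputable def matUnitSpan (n : ℕ) (P : Fin n → Fin n → Prop) :
    Submodule ℂ (Matrix (Fin n) (Fin n) ℂ) :=
  span ℂ {m | ∃ p q, P p q ∧ m = matE p q}

theorem mem_matUnitSpan_iff {P : Fin n → Fin n → Prop} {m : Matrix (Fin n) (Fin n) ℂ} :
    m ∈ matUnitSpan n P ↔ ∀ i j, ¬ P i j → m i j = 0 := by
  constructor
  · intro hm
    induction hm using span_induction with
    | mem x hx =>
      obtain ⟨p, q, hpq, rfl⟩ := hx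
      intro i j hij
      simp only [matE, single_apply, ite_eq_right_iff, and_imp]
      rintro rfl rfl
      exact absurd hpq hij
    | zero => simp
    | add x y _ _ hx hy => intro i j h; simp [hx i j h, hy i j h]
    | smul c x _ hx => intro i j h; simp [hx i j h]
  · intro h
    rw [matrix_eq_sum_single m]
    refine sum_mem fun i _ => sum_mem fun j _ => ?_
    by_cases hP : P i j
    · rw [← mul_one (m i j), ← smul_eq_mul, ← smul_single]
      exact smul_mem _ _ (subset_span ⟨i, j, hP, rfl⟩)
    · simp [h i j hP]

theorem finrank_matUnitSpan (P : Fin n → Fin n → Prop) :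
    Module.finrank ℂ (matUnitSpan n P) = Nat.card {pq : Fin n × Fin n // P pq.1 pq.2} := by
  classical
  have hrange : {m | ∃ p q, P p q ∧ m = matE p q} =
      Set.range fun s : {pq : Fin n × Fin n // P pq.1 pq.2} => matE s.1.1 s.1.2 := by
    ext m
    constructor
    · rintro ⟨p, q, h, rfl⟩; exact ⟨⟨(p, q), h⟩, rfl⟩
    · rintro ⟨⟨⟨p, q⟩, h⟩, rfl⟩; exact ⟨p, q, h, rfl⟩
  have hli : LinearIndependent ℂ fun s : {pq : Fin n × Fin n // P pq.1 pq.2} =>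
      matE s.1.1 s.1.2 := by
    convert (stdBasis ℂ (Fin n) (Fin n)).linearIndependent.comp _ Subtype.val_injective
      using 1
    ext1 s
    exact (stdBasis_eq_single ℂ s.1.1 s.1.2).symm
  rw [matUnitSpan, hrange, finrank_span_eq_card hli, Nat.card_eq_fintype_card]

theorem card_pairs_two_apart :
    Nat.card {pq : Fin n × Fin n // (pq.1 : ℕ) + 2 ≤ pq.2} = (n - 1) * (n - 2) / 2 := by
  classical
  let e : {pq : Fin n × Fin n // (pq.1 : ℕ) + 2 ≤ pq.2} ≃
      {pq : Fin (n - 1) × Fin (n - 1) // pq.1 < pq.2} :=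
    { toFun := fun s => ⟨(⟨s.1.1, by omega⟩, ⟨s.1.2 - 1, by omega⟩),
        by simp only [Fin.mk_lt_mk]; omega⟩
      invFun := fun t => ⟨(⟨t.1.1, by omega⟩, ⟨t.1.2 + 1, by omega⟩),
        by have := t.2; simp only [Fin.lt_def] at this; simp only; omega⟩
      left_inv := fun s => Subtype.ext <| Prod.ext rfl <| Fin.ext <| by
        have := s.2; simp only; omega
      right_inv := fun t => Subtype.ext <| Prod.ext rfl <| Fin.ext <| Nat.add_sub_cancel .. }
  rw [Nat.card_congr e, Nat.card_eq_fintype_card, Fintype.card_subtype,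
    Fintype.card_product_filter_lt, Fintype.card_fin, Nat.choose_two_right]
  rfl

theorem mul_mem_of_mem_strictUpper {x y : Matrix (Fin n) (Fin n) ℂ}
    (hx : x ∈ matUnitSpan n (· < ·)) (hy : y ∈ matUnitSpan n (· < ·)) :
    x * y ∈ matUnitSpan n fun p q => (p : ℕ) + 2 ≤ q := by
  rw [mem_matUnitSpan_iff] at hx hy ⊢
  intro i j hij
  rw [mul_apply]
  refine Finset.sum_eq_zero fun k _ => ?_
  by_cases hik : i < k
  · rw [hy k j (by rw [Fin.lt_def] at hik ⊢; omega), mul_zero]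
  · rw [hx i k hik, zero_mul]

theorem map_ad_strictUpper_le {x : Matrix (Fin n) (Fin n) ℂ} (hx : x ∈ matUnitSpan n (· < ·)) :
    map (LieAlgebra.ad ℂ (Matrix (Fin n) (Fin n) ℂ) x) (matUnitSpan n (· < ·)) ≤
      matUnitSpan n fun p q => (p : ℕ) + 2 ≤ q := by
  rintro _ ⟨y, hy, rfl⟩
  rw [LieAlgebra.ad_apply, Ring.lie_def]
  exact sub_mem (mul_mem_of_mem_strictUpper hx hy) (mul_mem_of_mem_strictUpper hy hx)

/-- The matrix unit with natural-number indices; it is `0` when an index is at least `n`. -/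
noncomputable def matUnit (n i j : ℕ) : Matrix (Fin n) (Fin n) ℂ :=
  of fun a b => if (a : ℕ) = i ∧ (b : ℕ) = j then 1 else 0

theorem matE_eq_matUnit (p q : Fin n) : matE p q = matUnit n p q := by
  ext a b
  simp [matE, matUnit, single_apply, Fin.ext_iff, eq_comm]

theorem matUnit_of_le_right {i j : ℕ} (hj : n ≤ j) : matUnit n i j = 0 := by
  ext a b
  simp only [matUnit, of_apply, Matrix.zero_apply, ite_eq_right_iff, one_ne_zero, imp_false]
  have := b.isLt
  omega

theorem matUnit_mem_matUnitSpan {P : Fin n → Fin n → Prop} {i j : ℕ}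
    (h : ∀ a b : Fin n, (a : ℕ) = i → (b : ℕ) = j → P a b) : matUnit n i j ∈ matUnitSpan n P := by
  rw [mem_matUnitSpan_iff]
  intro a b hab
  simp only [matUnit, of_apply, ite_eq_right_iff, one_ne_zero, imp_false, not_and]
  exact fun ha hb => hab (h a b ha hb)

noncomputable def superdiag (n : ℕ) : Matrix (Fin n) (Fin n) ℂ :=
  of fun a b => if (a : ℕ) + 1 = b then 1 else 0

theorem superdiag_mem_strictUpper : superdiag n ∈ matUnitSpan n (· < ·) := by
  rw [mem_matUnitSpan_iff]
  intro a b hab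
  simp only [superdiag, of_apply, ite_eq_right_iff, one_ne_zero, imp_false]
  rw [Fin.lt_def] at hab
  omega

theorem superdiag_mul_matUnit {i : ℕ} (hi : i + 1 < n) (j : ℕ) :
    superdiag n * matUnit n (i + 1) j = matUnit n i j := by
  ext a b
  rw [mul_apply, Finset.sum_eq_single ⟨i + 1, hi⟩]
  · simp only [superdiag, matUnit, of_apply]
    split_ifs <;> simp_all
  · intro k _ hk
    simp only [superdiag, matUnit, of_apply]
    split_ifs <;> simp_all [Fin.ext_iff]
  · simp

theorem matUnit_mul_superdiag (i j : ℕ) :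
    matUnit n i j * superdiag n = matUnit n i (j + 1) := by
  by_cases hj : n ≤ j
  · rw [matUnit_of_le_right hj, matUnit_of_le_right (by omega), zero_mul]
  ext a b
  rw [mul_apply, Finset.sum_eq_single ⟨j, by omega⟩]
  · simp only [superdiag, matUnit, of_apply]
    split_ifs <;> simp_all
  · intro k _ hk
    simp only [superdiag, matUnit, of_apply]
    split_ifs <;> simp_all [Fin.ext_iff]
  · simp

theorem lie_superdiag_matUnit {i : ℕ} (hi : i + 1 < n) (j : ℕ) :
    ⁅superdiag n, matUnit n (i + 1) j⁆ = matUnit n i j - matUnit n (i + 1) (j + 1) := by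
  rw [Ring.lie_def, superdiag_mul_matUnit hi, matUnit_mul_superdiag]

theorem matUnit_mem_map_ad_superdiag {i j : ℕ} (hij : i + 2 ≤ j) :
    matUnit n i j ∈
      map (LieAlgebra.ad ℂ (Matrix (Fin n) (Fin n) ℂ) (superdiag n)) (matUnitSpan n (· < ·)) := by
  by_cases hj : n ≤ j
  · rw [matUnit_of_le_right hj]
    exact zero_mem _
  have hstep : matUnit n i j = LieAlgebra.ad ℂ (Matrix (Fin n) (Fin n) ℂ) (superdiag n)
      (matUnit n (i + 1) j) + matUnit n (i + 1) (j + 1) := by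
    rw [LieAlgebra.ad_apply, lie_superdiag_matUnit (by omega), sub_add_cancel]
  rw [hstep]
  refine add_mem (mem_map_of_mem ?_) (matUnit_mem_map_ad_superdiag (by omega))
  exact matUnit_mem_matUnitSpan fun a b ha hb => by rw [Fin.lt_def]; omega
termination_by n - j

theorem map_ad_superdiag_strictUpper :
    map (LieAlgebra.ad ℂ (Matrix (Fin n) (Fin n) ℂ) (superdiag n)) (matUnitSpan n (· < ·)) =
      matUnitSpan n fun p q => (p : ℕ) + 2 ≤ q := by
  refine le_antisymm (map_ad_strictUpper_le superdiag_mem_strictUpper) (span_le.2 ?_)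
  rintro _ ⟨p, q, hpq, rfl⟩
  rw [matE_eq_matUnit]
  exact matUnit_mem_map_ad_superdiag hpq

end StrictUpperTriangular

open StrictUpperTriangular in
/-- The breadth of the Lie algebra `L` of strictly upper triangular `n × n` complex
matrices equals `(n−1)(n−2)/2`: some `x ∈ L` realizes this rank for `ad_x : L → L`,
and no `x ∈ L` exceeds it. -/
theorem strictly_upper_triangular_breadth (n : ℕ) :
    let L : Submodule ℂ (Matrix (Fin n) (Fin n) ℂ) :=
      Submodule.span ℂ {m : Matrix (Fin n) (Fin n) ℂ | ∃ p q : Fin n, p < q ∧ m = matE p q}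
    (∃ x ∈ L,
        Module.finrank ℂ ↥(Submodule.map (LieAlgebra.ad ℂ (Matrix (Fin n) (Fin n) ℂ) x) L) =
          (n - 1) * (n - 2) / 2) ∧
      ∀ x ∈ L,
        Module.finrank ℂ ↥(Submodule.map (LieAlgebra.ad ℂ (Matrix (Fin n) (Fin n) ℂ) x) L) ≤
          (n - 1) * (n - 2) / 2 := by
  intro L
  have hfinrank : Module.finrank ℂ (matUnitSpan n fun p q => (p : ℕ) + 2 ≤ q) =
      (n - 1) * (n - 2) / 2 := by
    rw [finrank_matUnitSpan, card_pairs_two_apart]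
  refine ⟨⟨superdiag n, superdiag_mem_strictUpper, ?_⟩, fun x hx => ?_⟩
  · rw [← hfinrank, ← map_ad_superdiag_strictUpper]
    rfl
  · rw [← hfinrank]
    exact finrank_mono (map_ad_strictUpper_le hx)
end
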